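/- arXiv:2504.15621 — 4 statements merged into one kernel-verified Lean document; each statement's English description precedes it below -/
import Mathlib

section
/- Let g_1, ..., g_n : (0,1) → ℂ be functions, each continuous on (0,1), such that each g_i(t) is O(1/t) as t → 0⁺ and O(1/(1-t)) as t → 1⁻, and additionally g_1 is bounded near 0 and g_n is bounded near 1. Then the iterated integral ∫_{0<t_1<⋯<t_n<1} |g_1(t_1)| ⋯ |g_n(t_n)| dt_1 ⋯ dt_n is finite. -/
open MeasureTheory Set


open ENNReal

lemma lintegral_fin_prod : ∀ (n : ℕ) (f : Fin n → ℝ → ℝ≥0∞), (∀ i, Measurable (f i)) →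
    ∫⁻ x : Fin n → ℝ, ∏ i, f i (x i) = ∏ i, ∫⁻ t, f i t := by
  intro n
  induction n with
  | zero =>
    intro f hf
    simp [volume_pi]
  | succ n ih =>
    intro f hf
    have key := (measurePreserving_piFinSuccAbove (fun _ : Fin (n+1) => (volume : Measure ℝ)) 0).symm
    rw [volume_pi, ← key.lintegral_comp_emb (MeasurableEquiv.measurableEmbedding _)]
    simp_rw [MeasurableEquiv.piFinSuccAbove_symm_apply, Fin.insertNthEquiv,
      Equiv.coe_fn_mk, Fin.insertNth_zero, Fin.prod_univ_succ, Fin.cons_zero, Fin.cons_succ]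
    simp only [Fin.zero_succAbove, cast_eq]
    have hg : Measurable fun y : Fin n → ℝ => ∏ x : Fin n, f x.succ (y x) :=
      Finset.measurable_prod _ fun i _ => (hf i.succ).comp (measurable_pi_apply i)
    rw [lintegral_prod_mul (f := f 0) (g := fun y : Fin n → ℝ => ∏ x : Fin n, f x.succ (y x))
      (hf 0).aemeasurable hg.aemeasurable]
    rw [show (Measure.pi fun _ : Fin n => (volume : Measure ℝ)) = volume from (volume_pi).symm,
      ih _ (fun i => hf i.succ)]

lemma master_bound (f : ℝ → ℂ) (w0 w1 : ℝ → ℝ)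
    (hw0 : ∀ t ∈ Ioo (0:ℝ) 1, 0 < w0 t ∧ w0 t ≤ 1)
    (hw1 : ∀ t ∈ Ioo (0:ℝ) 1, 0 < w1 t ∧ w1 t ≤ 1)
    (hc : ContinuousOn f (Ioo 0 1))
    (h0 : ∃ C δ : ℝ, 0 < δ ∧ ∀ t ∈ Ioo (0:ℝ) δ, ‖f t‖ ≤ C / w0 t)
    (h1 : ∃ C δ : ℝ, 0 < δ ∧ ∀ t ∈ Ioo (1 - δ) (1:ℝ), ‖f t‖ ≤ C / w1 t) :
    ∃ M : ℝ, 0 ≤ M ∧ ∀ t ∈ Ioo (0:ℝ) 1, ‖f t‖ ≤ M * ((w0 t)⁻¹ * (w1 t)⁻¹) := by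
  obtain ⟨C0, δ0, hδ0, h0⟩ := h0
  obtain ⟨C1, δ1, hδ1, h1⟩ := h1
  set a : ℝ := min δ0 (1/2) / 2 with ha_def
  set b : ℝ := 1 - min δ1 (1/2) / 2 with hb_def
  have ha0 : 0 < a := by positivity
  have ha1 : a ≤ 1/4 := by
    have : min δ0 (1/2) ≤ 1/2 := min_le_right _ _
    simp only [ha_def]; linarith
  have hb1 : b < 1 := by
    have : 0 < min δ1 (1/2) := lt_min hδ1 one_half_pos
    simp only [hb_def]; linarith
  have hb34 : 3/4 ≤ b := by
    have : min δ1 (1/2) ≤ 1/2 := min_le_right _ _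
    simp only [hb_def]; linarith
  have hsub : Icc a b ⊆ Ioo (0:ℝ) 1 := fun x hx => ⟨lt_of_lt_of_le ha0 hx.1, lt_of_le_of_lt hx.2 hb1⟩
  obtain ⟨K, hK⟩ := (isCompact_Icc (a := a) (b := b)).exists_bound_of_continuousOn (hc.mono hsub)
  refine ⟨max C0 0 + max C1 0 + max K 0, by positivity, fun t ht => ?_⟩
  obtain ⟨ht0, ht1⟩ := ht
  have hw0t := hw0 t ⟨ht0, ht1⟩
  have hw1t := hw1 t ⟨ht0, ht1⟩
  have hiv0 : 1 ≤ (w0 t)⁻¹ := (one_le_inv₀ hw0t.1).2 hw0t.2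
  have hiv1 : 1 ≤ (w1 t)⁻¹ := (one_le_inv₀ hw1t.1).2 hw1t.2
  have hx0 : (0:ℝ) < (w0 t)⁻¹ := by positivity
  have hx1 : (0:ℝ) < (w1 t)⁻¹ := by positivity
  rcases lt_or_ge t a with hta | hta
  · have hfb : ‖f t‖ ≤ C0 * (w0 t)⁻¹ := by
      rw [← div_eq_mul_inv]
      exact h0 t ⟨ht0, by
        have h1 : min δ0 (1/2) ≤ δ0 := min_le_left _ _
        have h2 : 0 < min δ0 (1/2) := lt_min hδ0 one_half_pos
        simp only [ha_def] at hta; linarith⟩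
    have hC0 : C0 ≤ max C0 0 := le_max_left _ _
    have step1 : C0 * (w0 t)⁻¹ ≤ max C0 0 * ((w0 t)⁻¹ * (w1 t)⁻¹) := by
      calc C0 * (w0 t)⁻¹ ≤ max C0 0 * (w0 t)⁻¹ := mul_le_mul_of_nonneg_right hC0 hx0.le
      _ ≤ max C0 0 * (w0 t)⁻¹ * (w1 t)⁻¹ := le_mul_of_one_le_right (by positivity) hiv1
      _ = _ := by ring
    have step2 : max C0 0 * ((w0 t)⁻¹ * (w1 t)⁻¹)
        ≤ (max C0 0 + max C1 0 + max K 0) * ((w0 t)⁻¹ * (w1 t)⁻¹) :=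
      mul_le_mul_of_nonneg_right
        (by have := le_max_right C1 0; have := le_max_right K 0; linarith) (by positivity)
    linarith
  rcases le_or_gt t b with htb | htb
  · have hfb : ‖f t‖ ≤ K := hK t ⟨hta, htb⟩
    have hK0 : K ≤ max K 0 := le_max_left _ _
    have hxy : 1 ≤ (w0 t)⁻¹ * (w1 t)⁻¹ := by
      calc (1:ℝ) = 1 * 1 := by ring
      _ ≤ (w0 t)⁻¹ * (w1 t)⁻¹ := mul_le_mul hiv0 hiv1 zero_le_one hx0.le
    have step : max K 0 ≤ (max C0 0 + max C1 0 + max K 0) * ((w0 t)⁻¹ * (w1 t)⁻¹) := by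
      calc max K 0 ≤ (max C0 0 + max C1 0 + max K 0) := by
            have := le_max_right C0 0; have := le_max_right C1 0; linarith
      _ ≤ _ := le_mul_of_one_le_right (by positivity) hxy
    linarith
  · have hfb : ‖f t‖ ≤ C1 * (w1 t)⁻¹ := by
      rw [← div_eq_mul_inv]
      exact h1 t ⟨by
        have h1 : min δ1 (1/2) ≤ δ1 := min_le_left _ _
        have h2 : 0 < min δ1 (1/2) := lt_min hδ1 one_half_pos
        simp only [hb_def] at htb; linarith, ht1⟩
    have hC1 : C1 ≤ max C1 0 := le_max_left _ _
    have step1 : C1 * (w1 t)⁻¹ ≤ max C1 0 * ((w0 t)⁻¹ * (w1 t)⁻¹) := by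
      calc C1 * (w1 t)⁻¹ ≤ max C1 0 * (w1 t)⁻¹ := mul_le_mul_of_nonneg_right hC1 hx1.le
      _ ≤ max C1 0 * (w1 t)⁻¹ * (w0 t)⁻¹ := le_mul_of_one_le_right (by positivity) hiv0
      _ = _ := by ring
    have step2 : max C1 0 * ((w0 t)⁻¹ * (w1 t)⁻¹)
        ≤ (max C0 0 + max C1 0 + max K 0) * ((w0 t)⁻¹ * (w1 t)⁻¹) :=
      mul_le_mul_of_nonneg_right
        (by have := le_max_right C0 0; have := le_max_right K 0; linarith) (by positivity)
    linarith

lemma keyA (n : ℕ) (hn : 1 ≤ n) (i0 : Fin n) (t : Fin n → ℝ) (ht : ∀ i, 0 < t i)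
    (hmono : ∀ i, t i0 ≤ t i) :
    ∏ i, (if i = i0 then 1 else (t i)⁻¹) ≤ ∏ i, (t i) ^ (-(1 - 1/(n:ℝ))) := by
  have hP : 0 < ∏ i, t i := Finset.prod_pos fun i _ => ht i
  have hQ : 0 < ∏ i ∈ Finset.univ.erase i0, t i :=
    Finset.prod_pos fun i _ => ht i
  have hne : (n:ℝ) ≠ 0 := Nat.cast_ne_zero.2 (by omega)
  have hfact : ∏ i, t i = t i0 * ∏ i ∈ Finset.univ.erase i0, t i :=
    (Finset.mul_prod_erase Finset.univ t (Finset.mem_univ i0)).symm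
  have hL : ∏ i, (if i = i0 then 1 else (t i)⁻¹)
      = (∏ i ∈ Finset.univ.erase i0, t i)⁻¹ := by
    rw [← Finset.mul_prod_erase Finset.univ _ (Finset.mem_univ i0), if_pos rfl, one_mul,
      Finset.prod_congr rfl (fun i hi => if_neg (Finset.ne_of_mem_erase hi)),
      ← Finset.prod_inv_distrib]
  have hR : ∏ i, (t i) ^ (-(1 - 1/(n:ℝ))) = (∏ i, t i) ^ (-(1 - 1/(n:ℝ))) :=
    Real.finset_prod_rpow Finset.univ t (fun i _ => (ht i).le) _
  rw [hL, hR]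
  have hpow : t i0 ^ n ≤ ∏ i, t i := by
    calc t i0 ^ n = ∏ _i : Fin n, t i0 := by
          rw [Finset.prod_const, Finset.card_univ, Fintype.card_fin]
    _ ≤ ∏ i, t i := Finset.prod_le_prod (fun _ _ => (ht i0).le) (fun i _ => hmono i)
  have hkey : t i0 ≤ (∏ i, t i) ^ (1/(n:ℝ)) := by
    have h2 : t i0 = (t i0 ^ n) ^ (1/(n:ℝ)) := by
      rw [← Real.rpow_natCast (t i0) n, ← Real.rpow_mul (ht i0).le, mul_one_div,
        div_self hne, Real.rpow_one]
    rw [h2]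
    exact Real.rpow_le_rpow (pow_pos (ht i0) n).le hpow (by positivity)
  rw [show -(1 - 1/(n:ℝ)) = 1/(n:ℝ) + (-1) by ring, Real.rpow_add hP, Real.rpow_neg_one,
    hfact, mul_inv]
  have h1 : 1 ≤ (t i0 * ∏ i ∈ Finset.univ.erase i0, t i) ^ (1/(n:ℝ)) * (t i0)⁻¹ := by
    rw [← div_eq_mul_inv, le_div_iff₀ (ht i0), one_mul, ← hfact]
    exact hkey
  calc (∏ i ∈ Finset.univ.erase i0, t i)⁻¹
      = 1 * (∏ i ∈ Finset.univ.erase i0, t i)⁻¹ := (one_mul _).symm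
    _ ≤ ((t i0 * ∏ i ∈ Finset.univ.erase i0, t i) ^ (1/(n:ℝ)) * (t i0)⁻¹)
        * (∏ i ∈ Finset.univ.erase i0, t i)⁻¹ :=
        mul_le_mul_of_nonneg_right h1 (inv_nonneg.2 hQ.le)
    _ = _ := by ring

lemma lintegral_rpow_fin (p : ℝ) (hp1 : p < 1) (f : ℝ → ℝ) (hf : IntegrableOn f (Ioo (0:ℝ) 1)) :
    ∫⁻ t in Ioo (0:ℝ) 1, ENNReal.ofReal (f t) < ⊤ := by
  have h := hf.2
  rw [HasFiniteIntegral] at h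
  refine lt_of_le_of_lt (lintegral_mono fun t => ?_) h
  rw [← ofReal_norm_eq_enorm]
  exact ENNReal.ofReal_le_ofReal (le_abs_self _)

lemma oneDim (p : ℝ) (hp0 : 0 ≤ p) (hp1 : p < 1) :
    ∫⁻ t in Ioo (0:ℝ) 1, ENNReal.ofReal (t ^ (-p) * (1 - t) ^ (-p)) < ⊤ := by
  have hbase : IntervalIntegrable (fun x : ℝ => x ^ (-p)) volume 0 1 :=
    intervalIntegral.intervalIntegrable_rpow' (by linarith)
  have h0 : IntegrableOn (fun t : ℝ => t ^ (-p)) (Ioo 0 1) :=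
    (intervalIntegral.integrableOn_Ioo_rpow_iff one_pos).2 (by linarith)
  have h1 : IntegrableOn (fun t : ℝ => (1 - t) ^ (-p)) (Ioo 0 1) := by
    have := (hbase.comp_sub_left 1).symm
    simp only [sub_zero, sub_self] at this
    rwa [intervalIntegrable_iff_integrableOn_Ioo_of_le zero_le_one] at this
  -- pointwise bound
  have hptw : ∀ t ∈ Ioo (0:ℝ) 1,
      t ^ (-p) * (1 - t) ^ (-p) ≤ (2:ℝ) ^ p * (t ^ (-p) + (1 - t) ^ (-p)) := by
    intro t ht
    have ht0 := ht.1
    have ht1' : 0 < 1 - t := by linarith [ht.2]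
    have h2p : ((1:ℝ)/2) ^ (-p) = 2 ^ p := by
      rw [show (1/2:ℝ) = 2⁻¹ by norm_num, Real.inv_rpow (by norm_num),
        ← Real.rpow_neg (by norm_num), neg_neg]
    have hA : 0 ≤ t ^ (-p) := Real.rpow_nonneg ht0.le _
    have hB : 0 ≤ (1 - t) ^ (-p) := Real.rpow_nonneg ht1'.le _
    have h2pos : (0:ℝ) < 2 ^ p := Real.rpow_pos_of_pos two_pos _
    rcases le_total t (1/2) with h | h
    · have : (1 - t) ^ (-p) ≤ (1/2:ℝ) ^ (-p) :=
        Real.rpow_le_rpow_of_nonpos one_half_pos (by linarith) (by linarith)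
      rw [h2p] at this
      nlinarith [mul_le_mul_of_nonneg_left this hA]
    · have : t ^ (-p) ≤ (1/2:ℝ) ^ (-p) :=
        Real.rpow_le_rpow_of_nonpos one_half_pos (by linarith) (by linarith)
      rw [h2p] at this
      nlinarith [mul_le_mul_of_nonneg_left this hB]
  calc ∫⁻ t in Ioo (0:ℝ) 1, ENNReal.ofReal (t ^ (-p) * (1 - t) ^ (-p))
      ≤ ∫⁻ t in Ioo (0:ℝ) 1, ENNReal.ofReal ((2:ℝ) ^ p * (t ^ (-p) + (1 - t) ^ (-p))) :=
        setLIntegral_mono' measurableSet_Ioo fun t ht => ENNReal.ofReal_le_ofReal (hptw t ht)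
    _ ≤ ∫⁻ t in Ioo (0:ℝ) 1, ENNReal.ofReal ((2:ℝ) ^ p)
          * (ENNReal.ofReal (t ^ (-p)) + ENNReal.ofReal ((1 - t) ^ (-p))) := by
        refine setLIntegral_mono' measurableSet_Ioo fun t ht => ?_
        rw [ENNReal.ofReal_mul (by positivity)]
        exact mul_le_mul_right ENNReal.ofReal_add_le _
    _ = ENNReal.ofReal ((2:ℝ) ^ p)
          * ∫⁻ t in Ioo (0:ℝ) 1, (ENNReal.ofReal (t ^ (-p)) + ENNReal.ofReal ((1 - t) ^ (-p))) :=
        lintegral_const_mul' _ _ ENNReal.ofReal_ne_top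
    _ < ⊤ := by
        refine ENNReal.mul_lt_top ENNReal.ofReal_lt_top ?_
        rw [lintegral_add_left']
        · exact ENNReal.add_lt_top.2 ⟨lintegral_rpow_fin p hp1 _ h0, lintegral_rpow_fin p hp1 _ h1⟩
        · exact (Measurable.ennreal_ofReal (by fun_prop)).aemeasurable



/-- Let `g 0, …, g (n-1) : ℝ → ℂ` each be continuous on `(0,1)`, with `g i t = O(1/t)` as
`t → 0⁺` and `g i t = O(1/(1-t))` as `t → 1⁻`, and assume moreover that `g 0` is bounded
near `0` and `g (n-1)` is bounded near `1`.  Then the iterated integral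
`∫_{0<t₁<⋯<t_n<1} |g 0 (t₁)| ⋯ |g (n-1) (t_n)| dt` over the open simplex is finite. -/
theorem iterated_integral_convergence (n : ℕ) (hn : 1 ≤ n) (g : Fin n → ℝ → ℂ)
    (hcont : ∀ i, ContinuousOn (g i) (Ioo (0 : ℝ) 1))
    (hpole0 : ∀ i, ∃ C δ : ℝ, 0 < δ ∧ ∀ t ∈ Ioo (0 : ℝ) δ, ‖g i t‖ ≤ C / t)
    (hpole1 : ∀ i, ∃ C δ : ℝ, 0 < δ ∧ ∀ t ∈ Ioo (1 - δ) (1 : ℝ), ‖g i t‖ ≤ C / (1 - t))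
    (hbdd0 : ∃ C δ : ℝ, 0 < δ ∧ ∀ t ∈ Ioo (0 : ℝ) δ, ‖g ⟨0, by omega⟩ t‖ ≤ C)
    (hbdd1 : ∃ C δ : ℝ, 0 < δ ∧ ∀ t ∈ Ioo (1 - δ) (1 : ℝ), ‖g ⟨n - 1, by omega⟩ t‖ ≤ C) :
    ∫⁻ t in {t : Fin n → ℝ | StrictMono t ∧ ∀ i, 0 < t i ∧ t i < 1},
      (∏ i, ENNReal.ofReal ‖g i (t i)‖) < ⊤ := by
  set i0 : Fin n := ⟨0, by omega⟩ with hi0_def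
  set i1 : Fin n := ⟨n - 1, by omega⟩ with hi1_def
  set p : ℝ := 1 - 1/(n:ℝ) with hp_def
  have hnpos : (0:ℝ) < (n:ℝ) := by exact_mod_cast Nat.pos_of_ne_zero (by omega)
  have hp0 : 0 ≤ p := by
    have : 1/(n:ℝ) ≤ 1 := by
      rw [div_le_one hnpos]; exact_mod_cast hn
    simp only [hp_def]; linarith
  have hp1 : p < 1 := by
    have : 0 < 1/(n:ℝ) := by positivity
    simp only [hp_def]; linarith
  set w0 : Fin n → ℝ → ℝ := fun i t => if i = i0 then 1 else t with hw0_def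
  set w1 : Fin n → ℝ → ℝ := fun i t => if i = i1 then 1 else 1 - t with hw1_def
  -- Step 1: uniform bounds
  have hM : ∀ i, ∃ M : ℝ, 0 ≤ M ∧ ∀ t ∈ Ioo (0:ℝ) 1,
      ‖g i t‖ ≤ M * ((w0 i t)⁻¹ * (w1 i t)⁻¹) := by
    intro i
    refine master_bound (g i) (w0 i) (w1 i) ?_ ?_ (hcont i) ?_ ?_
    · intro t ht
      by_cases h : i = i0
      · simp only [hw0_def, h, ite_true]
        exact ⟨one_pos, le_refl 1⟩
      · simp only [hw0_def, h, ite_false]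
        exact ⟨ht.1, ht.2.le⟩
    · intro t ht
      by_cases h : i = i1
      · simp only [hw1_def, h, ite_true]
        exact ⟨one_pos, le_refl 1⟩
      · simp only [hw1_def, h, ite_false]
        constructor
        · linarith [ht.2]
        · linarith [ht.1]
    · by_cases h : i = i0
      · obtain ⟨C, δ, hδ, hC⟩ := hbdd0
        refine ⟨C, δ, hδ, fun t ht => ?_⟩
        simp only [hw0_def, h, ite_true, div_one]
        exact hC t ht
      · obtain ⟨C, δ, hδ, hC⟩ := hpole0 i
        exact ⟨C, δ, hδ, fun t ht => by simpa only [hw0_def, h, ite_false] using hC t ht⟩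
    · by_cases h : i = i1
      · obtain ⟨C, δ, hδ, hC⟩ := hbdd1
        refine ⟨C, δ, hδ, fun t ht => ?_⟩
        simp only [hw1_def, h, ite_true, div_one]
        exact hC t ht
      · obtain ⟨C, δ, hδ, hC⟩ := hpole1 i
        exact ⟨C, δ, hδ, fun t ht => by simpa only [hw1_def, h, ite_false] using hC t ht⟩
  choose M hM0 hMb using hM
  -- Step 2: S is measurable
  have hS : MeasurableSet {t : Fin n → ℝ | StrictMono t ∧ ∀ i, 0 < t i ∧ t i < 1} := by
    have hrw : {t : Fin n → ℝ | StrictMono t ∧ ∀ i, 0 < t i ∧ t i < 1}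
        = (⋂ (i : Fin n) (j : Fin n), {t : Fin n → ℝ | i < j → t i < t j}) ∩
          ⋂ i : Fin n, ({t : Fin n → ℝ | 0 < t i} ∩ {t : Fin n → ℝ | t i < 1}) := by
      ext t
      simp only [mem_inter_iff, mem_iInter, mem_setOf_eq, StrictMono]
      try tauto
    rw [hrw]
    refine MeasurableSet.inter ?_ ?_
    · refine MeasurableSet.iInter fun i => MeasurableSet.iInter fun j => ?_
      by_cases h : i < j
      · have : {t : Fin n → ℝ | i < j → t i < t j} = {t : Fin n → ℝ | t i < t j} := by
          ext; simp [h]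
        rw [this]
        exact measurableSet_lt (measurable_pi_apply i) (measurable_pi_apply j)
      · have : {t : Fin n → ℝ | i < j → t i < t j} = univ := by ext; simp [h]
        rw [this]; exact MeasurableSet.univ
    · exact MeasurableSet.iInter fun i =>
        (measurableSet_lt measurable_const (measurable_pi_apply i)).inter
          (measurableSet_lt (measurable_pi_apply i) measurable_const)
  -- Step 3: the dominating per-coordinate functions
  set F : Fin n → ℝ → ENNReal := fun i => (Ioo (0:ℝ) 1).indicator
    (fun t => ENNReal.ofReal (M i * (t ^ (-p) * (1 - t) ^ (-p)))) with hF_def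
  have hFmeas : ∀ i, Measurable (F i) := by
    intro i
    exact (Measurable.ennreal_ofReal (by fun_prop)).indicator measurableSet_Ioo
  -- Step 4: pointwise bound on the simplex
  have hptw : ∀ t ∈ {t : Fin n → ℝ | StrictMono t ∧ ∀ i, 0 < t i ∧ t i < 1},
      (∏ i, ENNReal.ofReal ‖g i (t i)‖) ≤ ∏ i, F i (t i) := by
    rintro t ⟨hmono, h01⟩
    have hti : ∀ i, t i ∈ Ioo (0:ℝ) 1 := fun i => ⟨(h01 i).1, (h01 i).2⟩
    have hFi : ∀ i, F i (t i) = ENNReal.ofReal (M i * ((t i) ^ (-p) * (1 - t i) ^ (-p))) :=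
      fun i => indicator_of_mem (hti i) _
    simp only [hFi]
    rw [← ENNReal.ofReal_prod_of_nonneg (fun i _ => norm_nonneg _),
      ← ENNReal.ofReal_prod_of_nonneg (fun i _ => by
        have := Real.rpow_nonneg (hti i).1.le (-p)
        have h2 : (0:ℝ) ≤ (1 - t i) ^ (-p) := Real.rpow_nonneg (by linarith [(hti i).2]) _
        exact mul_nonneg (hM0 i) (mul_nonneg this h2))]
    refine ENNReal.ofReal_le_ofReal ?_
    have step1 : ∏ i, ‖g i (t i)‖ ≤ ∏ i, (M i * ((w0 i (t i))⁻¹ * (w1 i (t i))⁻¹)) :=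
      Finset.prod_le_prod (fun i _ => norm_nonneg _) (fun i _ => hMb i (t i) (hti i))
    have hA : ∏ i, (w0 i (t i))⁻¹ ≤ ∏ i, (t i) ^ (-p) := by
      have := keyA n hn i0 t (fun i => (hti i).1)
        (fun i => hmono.monotone (by simp [hi0_def, Fin.le_def]))
      simpa only [hw0_def, apply_ite Inv.inv, inv_one] using this
    have hB : ∏ i, (w1 i (t i))⁻¹ ≤ ∏ i, (1 - t i) ^ (-p) := by
      have := keyA n hn i1 (fun i => 1 - t i)
        (fun i => by show (0:ℝ) < 1 - t i; linarith [(hti i).2])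
        (fun i => by
          show (1:ℝ) - t i1 ≤ 1 - t i
          have : t i ≤ t i1 := hmono.monotone (by
            simp only [hi1_def, Fin.le_def]
            omega)
          linarith)
      simpa only [hw1_def, apply_ite Inv.inv, inv_one] using this
    have hprodM : (0:ℝ) ≤ ∏ i, M i := Finset.prod_nonneg fun i _ => hM0 i
    have hApnn : (0:ℝ) ≤ ∏ i, (t i) ^ (-p) :=
      Finset.prod_nonneg fun i _ => Real.rpow_nonneg (hti i).1.le _
    have hBnn : (0:ℝ) ≤ ∏ i, (w1 i (t i))⁻¹ := by
      refine Finset.prod_nonneg fun i _ => inv_nonneg.2 ?_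
      by_cases h : i = i1
      · simp only [hw1_def, h, ite_true]; exact zero_le_one
      · simp only [hw1_def, h, ite_false]; linarith [(hti i).2]
    calc ∏ i, ‖g i (t i)‖
        ≤ ∏ i, (M i * ((w0 i (t i))⁻¹ * (w1 i (t i))⁻¹)) := step1
      _ = (∏ i, M i) * ((∏ i, (w0 i (t i))⁻¹) * (∏ i, (w1 i (t i))⁻¹)) := by
          rw [Finset.prod_mul_distrib, Finset.prod_mul_distrib]
      _ ≤ (∏ i, M i) * ((∏ i, (t i) ^ (-p)) * (∏ i, (1 - t i) ^ (-p))) := by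
          refine mul_le_mul_of_nonneg_left ?_ hprodM
          exact mul_le_mul hA hB hBnn hApnn
      _ = ∏ i, (M i * ((t i) ^ (-p) * (1 - t i) ^ (-p))) := by
          rw [Finset.prod_mul_distrib, Finset.prod_mul_distrib]
  -- Step 5: conclude
  calc ∫⁻ t in {t : Fin n → ℝ | StrictMono t ∧ ∀ i, 0 < t i ∧ t i < 1},
        (∏ i, ENNReal.ofReal ‖g i (t i)‖)
      ≤ ∫⁻ t in {t : Fin n → ℝ | StrictMono t ∧ ∀ i, 0 < t i ∧ t i < 1},
        ∏ i, F i (t i) := setLIntegral_mono' hS hptw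
    _ ≤ ∫⁻ t : Fin n → ℝ, ∏ i, F i (t i) := setLIntegral_le_lintegral _ _
    _ = ∏ i, ∫⁻ s, F i s := lintegral_fin_prod n F hFmeas
    _ < ⊤ := by
        refine ENNReal.prod_lt_top fun i _ => ?_
        have : ∫⁻ s, F i s
            = ∫⁻ s in Ioo (0:ℝ) 1, ENNReal.ofReal (M i * (s ^ (-p) * (1 - s) ^ (-p))) := by
          rw [hF_def]
          exact lintegral_indicator measurableSet_Ioo _
        rw [this]
        have heq : ∀ s : ℝ, ENNReal.ofReal (M i * (s ^ (-p) * (1 - s) ^ (-p)))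
            = ENNReal.ofReal (M i) * ENNReal.ofReal (s ^ (-p) * (1 - s) ^ (-p)) :=
          fun s => ENNReal.ofReal_mul (hM0 i)
        simp only [heq]
        rw [lintegral_const_mul' _ _ ENNReal.ofReal_ne_top]
        exact ENNReal.mul_lt_top ENNReal.ofReal_lt_top (oneDim p hp0 hp1)
end

section
/- For any tuple l = (l_1,…,l_r) ∈ ℕ₀^r, the rational function u_1⋯u_r · P_l(u_1,…,u_r) is a polynomial with integer coefficients in u_1,…,u_r, and it is homogeneous of degree l_1 + ⋯ + l_r. -/
set_option maxHeartbeats 1000000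

open Finset

/-- `Ssum K r u i = u_i + u_{i+1} + ⋯ + u_r` (1-based indexing). -/
noncomputable def Ssum (K : Type*) [Field K] (r : ℕ) (u : ℕ → K) (i : ℕ) : K :=
  ∑ j ∈ Finset.Icc i r, u j

/-- The rational function
`P_l(u_1,…,u_r) = ∑_{i=0}^{r} u_1^{l_1−1}⋯u_{i−1}^{l_{i−1}−1}(u_i+⋯+u_r)^{l_i−1}
(−u_{i+1}−⋯−u_r)^{l_{i+1}−1} u_{i+1}^{l_{i+2}−1}⋯u_{r-1}^{l_r−1}`
(with the `i = 0` term `(−u_1−⋯−u_r)^{l_1−1}u_1^{l_2−1}⋯u_{r-1}^{l_r−1}` and the `i = r`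
term `u_1^{l_1−1}⋯u_{r-1}^{l_{r-1}−1}u_r^{l_r−1}`), where exponents `l_j − 1` are integers
(possibly `−1`). -/
noncomputable def Pfun (K : Type*) [Field K] (r : ℕ) (l : ℕ → ℕ) (u : ℕ → K) : K :=
  (-(Ssum K r u 1)) ^ ((l 1 : ℤ) - 1) *
      ∏ j ∈ Finset.Icc 1 (r - 1), u j ^ ((l (j + 1) : ℤ) - 1)
    + (∑ i ∈ Finset.Icc 1 (r - 1),
        (∏ j ∈ Finset.Icc 1 (i - 1), u j ^ ((l j : ℤ) - 1))
          * (Ssum K r u i) ^ ((l i : ℤ) - 1)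
          * (-(Ssum K r u (i + 1))) ^ ((l (i + 1) : ℤ) - 1)
          * ∏ j ∈ Finset.Icc (i + 1) (r - 1), u j ^ ((l (j + 1) : ℤ) - 1))
    + (∏ j ∈ Finset.Icc 1 (r - 1), u j ^ ((l j : ℤ) - 1)) * u r ^ ((l r : ℤ) - 1)

/-- The field of rational functions `ℚ(u_1, u_2, …)`. -/
abbrev K₀ : Type _ := FractionRing (MvPolynomial ℕ ℚ)

/-- The indeterminate `u_j` viewed inside `ℚ(u_1, u_2, …)`. -/
noncomputable def uvar (j : ℕ) : K₀ :=
  algebraMap (MvPolynomial ℕ ℚ) K₀ (MvPolynomial.X j)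

/-- The canonical map `ℤ[u_1, u_2, …] → ℚ(u_1, u_2, …)`. -/
noncomputable def intPolyMap : MvPolynomial ℕ ℤ → K₀ :=
  fun p => algebraMap (MvPolynomial ℕ ℚ) K₀ (MvPolynomial.map (Int.castRingHom ℚ) p)

/-! ### Auxiliary definitions -/

noncomputable def phi : MvPolynomial ℕ ℤ →+* K₀ :=
  (algebraMap (MvPolynomial ℕ ℚ) K₀).comp (MvPolynomial.map (Int.castRingHom ℚ))

lemma intPolyMap_eq (p : MvPolynomial ℕ ℤ) : intPolyMap p = phi p := rfl

lemma phi_X (j : ℕ) : phi (MvPolynomial.X j) = uvar j := by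
  simp [phi, uvar]

/-- Splitting a product over `Icc`. -/
lemma prod_Icc_split {M : Type*} [CommMonoid M] (f : ℕ → M) {a c b : ℕ}
    (h1 : a ≤ c + 1) (h2 : c ≤ b) :
    (∏ j ∈ Icc a b, f j) = (∏ j ∈ Icc a c, f j) * ∏ j ∈ Icc (c+1) b, f j := by
  rw [← Finset.Ico_add_one_right_eq_Icc, ← Finset.Ico_add_one_right_eq_Icc a c, ← Finset.Ico_add_one_right_eq_Icc (c+1) b]
  exact (Finset.prod_Ico_consecutive f h1 (by omega)).symm

/-- Splitting a sum over `Icc`. -/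
lemma sum_Icc_split {M : Type*} [AddCommMonoid M] (f : ℕ → M) {a c b : ℕ}
    (h1 : a ≤ c + 1) (h2 : c ≤ b) :
    (∑ j ∈ Icc a b, f j) = (∑ j ∈ Icc a c, f j) + ∑ j ∈ Icc (c+1) b, f j := by
  rw [← Finset.Ico_add_one_right_eq_Icc, ← Finset.Ico_add_one_right_eq_Icc a c, ← Finset.Ico_add_one_right_eq_Icc (c+1) b]
  exact (Finset.sum_Ico_consecutive f h1 (by omega)).symm

/-- Shifting a sum over `Icc`. -/
lemma sum_Icc_shift {M : Type*} [AddCommMonoid M] (f : ℕ → M) (a b : ℕ) :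
    (∑ j ∈ Icc a b, f (j+1)) = ∑ j ∈ Icc (a+1) (b+1), f j := by
  rw [← Finset.map_add_right_Icc a b 1, Finset.sum_map]
  simp [addRightEmbedding_apply]

lemma zpow_fix (x : K₀) (hx : x ≠ 0) (m : ℕ) : x ^ ((m:ℤ)-1) * x = x ^ m := by
  rw [← zpow_add_one₀ hx, sub_add_cancel, zpow_natCast]

lemma zpow_of_ne (x : K₀) {m : ℕ} (hm : m ≠ 0) : x ^ ((m:ℤ)-1) = x ^ (m-1 : ℕ) := by
  rw [← zpow_natCast]; congr 1; omega

/-! ### Field-side and polynomial-side pieces -/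

noncomputable def SK (r i : ℕ) : K₀ := ∑ j ∈ Icc i r, uvar j

noncomputable def AK (l : ℕ → ℕ) (i : ℕ) : K₀ := ∏ j ∈ Icc 1 (i-1), uvar j ^ l j

noncomputable def CK (r : ℕ) (l : ℕ → ℕ) (i : ℕ) : K₀ :=
  uvar r * ∏ j ∈ Icc (i+1) (r-1), uvar j ^ l (j+1)

noncomputable def DK (r : ℕ) (l : ℕ → ℕ) (i : ℕ) : K₀ :=
  if i = 1 then (-SK r 1) ^ ((l 1 : ℤ)-1) * CK r l 0
  else AK l (i-1) * SK r (i-1) ^ l (i-1) * (-SK r i) ^ ((l i : ℤ)-1) * CK r l (i-1)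

noncomputable def EK (r : ℕ) (l : ℕ → ℕ) (i : ℕ) : K₀ :=
  if i = r then AK l r * SK r r ^ ((l r : ℤ)-1) * SK r r
  else AK l i * SK r i ^ ((l i : ℤ)-1) * (-SK r (i+1)) ^ (l (i+1)) * CK r l i

noncomputable def PS (r i : ℕ) : MvPolynomial ℕ ℤ := ∑ j ∈ Icc i r, MvPolynomial.X j

noncomputable def PA (l : ℕ → ℕ) (i : ℕ) : MvPolynomial ℕ ℤ :=
  ∏ j ∈ Icc 1 (i-1), MvPolynomial.X j ^ l j

noncomputable def PC (r : ℕ) (l : ℕ → ℕ) (i : ℕ) : MvPolynomial ℕ ℤ :=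
  MvPolynomial.X r * ∏ j ∈ Icc (i+1) (r-1), MvPolynomial.X j ^ l (j+1)

noncomputable def GP (P Q : MvPolynomial ℕ ℤ) (m : ℕ) : MvPolynomial ℕ ℤ :=
  ∑ k ∈ range m, P ^ k * Q ^ (m-1-k)

lemma phi_PS (r i : ℕ) : phi (PS r i) = SK r i := by
  simp [PS, SK, map_sum, phi_X]

lemma phi_PA (l : ℕ → ℕ) (i : ℕ) : phi (PA l i) = AK l i := by
  simp [PA, AK, map_prod, phi_X]

lemma phi_PC (r : ℕ) (l : ℕ → ℕ) (i : ℕ) : phi (PC r l i) = CK r l i := by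
  simp [PC, CK, map_prod, phi_X]

lemma phi_GP (P Q : MvPolynomial ℕ ℤ) (m : ℕ) :
    phi (GP P Q m) = ∑ k ∈ range m, (phi P) ^ k * (phi Q) ^ (m-1-k) := by
  simp [GP]

lemma uvar_ne_zero (j : ℕ) : uvar j ≠ 0 := by
  unfold uvar
  rw [map_ne_zero_iff _ (IsFractionRing.injective (MvPolynomial ℕ ℚ) K₀)]
  exact MvPolynomial.X_ne_zero (R := ℚ) j

lemma SK_eq_alg (r i : ℕ) : SK r i =
    algebraMap (MvPolynomial ℕ ℚ) K₀ (∑ j ∈ Icc i r, MvPolynomial.X j) := by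
  simp [SK, uvar, map_sum]

lemma SK_ne_zero {r i : ℕ} (h1 : 1 ≤ i) (h2 : i ≤ r) : SK r i ≠ 0 := by
  rw [SK_eq_alg, map_ne_zero_iff _ (IsFractionRing.injective (MvPolynomial ℕ ℚ) K₀)]
  intro h0
  have := congrArg (MvPolynomial.eval (fun _ => (1:ℚ))) h0
  simp [MvPolynomial.eval_sum] at this
  omega

lemma negSK_ne_zero {r i : ℕ} (h1 : 1 ≤ i) (h2 : i ≤ r) : -SK r i ≠ 0 :=
  neg_ne_zero.mpr (SK_ne_zero h1 h2)

lemma SK_succ {r i : ℕ} (h : i ≤ r) : SK r i = uvar i + SK r (i+1) := by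
  unfold SK
  rw [sum_Icc_split (fun j => uvar j) (a := i) (c := i) (b := r) (by omega) h, Icc_self,
    Finset.sum_singleton]

lemma SK_last (r : ℕ) : SK r r = uvar r := by
  unfold SK; rw [Icc_self, Finset.sum_singleton]

lemma AK_succ (l : ℕ → ℕ) {i : ℕ} (h : 1 ≤ i) : AK l (i+1) = AK l i * uvar i ^ l i := by
  unfold AK
  have h2 : i + 1 - 1 = i := by omega
  have h3 : i - 1 + 1 = i := by omega
  rw [h2, prod_Icc_split (fun j => uvar j ^ l j) (by omega : 1 ≤ (i-1) + 1) (by omega : i - 1 ≤ i),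
    h3, Icc_self, Finset.prod_singleton]

lemma CK_pred {r i : ℕ} (l : ℕ → ℕ) (h1 : 1 ≤ i) (h2 : i ≤ r - 1) :
    CK r l (i-1) = uvar i ^ l (i+1) * CK r l i := by
  unfold CK
  have h3 : i - 1 + 1 = i := by omega
  rw [h3, prod_Icc_split (fun j => uvar j ^ l (j+1)) (a := i) (c := i) (b := r-1) (by omega) h2,
    Icc_self, Finset.prod_singleton]
  ring

/-! ### Homogeneity of the polynomial pieces -/

lemma PS_homog (r i : ℕ) : (PS r i).IsHomogeneous 1 :=
  MvPolynomial.IsHomogeneous.sum _ _ _ (fun j _ => MvPolynomial.isHomogeneous_X _ _)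

lemma PA_homog (l : ℕ → ℕ) (i : ℕ) : (PA l i).IsHomogeneous (∑ j ∈ Icc 1 (i-1), l j) :=
  MvPolynomial.IsHomogeneous.prod _ _ _ (fun j _ => by
    simpa using (MvPolynomial.isHomogeneous_X ℤ j).pow (l j))

lemma PC_homog (r : ℕ) (l : ℕ → ℕ) (i : ℕ) :
    (PC r l i).IsHomogeneous (1 + ∑ j ∈ Icc (i+1) (r-1), l (j+1)) :=
  (MvPolynomial.isHomogeneous_X ℤ r).mul
    (MvPolynomial.IsHomogeneous.prod _ _ _ (fun j _ => by
      simpa using (MvPolynomial.isHomogeneous_X ℤ j).pow (l (j+1))))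

lemma GP_homog {P Q : MvPolynomial ℕ ℤ} (hP : P.IsHomogeneous 1) (hQ : Q.IsHomogeneous 1)
    (m : ℕ) : (GP P Q m).IsHomogeneous (m-1) :=
  MvPolynomial.IsHomogeneous.sum _ _ _ (fun k hk => by
    have hk' : k < m := Finset.mem_range.mp hk
    have h2 : k + (m-1-k) = m - 1 := by omega
    exact h2 ▸ (by simpa using (hP.pow k).mul (hQ.pow (m-1-k))))

/-! ### Step A : the field identity -/

lemma Ssum_eq (r i : ℕ) : Ssum K₀ r uvar i = SK r i := rfl

lemma prod_mul_zpow (s : Finset ℕ) (l : ℕ → ℕ) :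
    (∏ j ∈ s, uvar j) * (∏ j ∈ s, uvar j ^ ((l j : ℤ) - 1)) = ∏ j ∈ s, uvar j ^ l j := by
  rw [← Finset.prod_mul_distrib]
  exact Finset.prod_congr rfl (fun j _ => by
    rw [mul_comm, zpow_fix _ (uvar_ne_zero j), ← zpow_natCast])

lemma stepA (r : ℕ) (hr : 1 ≤ r) (l : ℕ → ℕ) :
    (∏ j ∈ Icc 1 r, uvar j) * Pfun K₀ r l uvar = ∑ i ∈ Icc 1 r, (DK r l i + EK r l i) := by
  have hrr : r - 1 + 1 = r := by omega
  have hsplit : ∑ i ∈ Icc 1 r, (DK r l i + EK r l i)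
      = DK r l 1 + (∑ i ∈ Icc 1 (r-1), (EK r l i + DK r l (i+1))) + EK r l r := by
    rw [Finset.sum_add_distrib, Finset.sum_add_distrib,
      sum_Icc_split (DK r l) (a := 1) (c := 1) (b := r) (by omega) hr, Icc_self,
      Finset.sum_singleton, sum_Icc_shift (fun i => DK r l i) 1 (r-1), hrr,
      sum_Icc_split (EK r l) (a := 1) (c := r-1) (b := r) (by omega) (by omega), hrr,
      Icc_self, Finset.sum_singleton]
    ring
  rw [hsplit]
  have hProd : (∏ j ∈ Icc 1 r, uvar j) = (∏ j ∈ Icc 1 (r-1), uvar j) * uvar r := by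
    rw [prod_Icc_split (fun j => uvar j) (a := 1) (c := r-1) (b := r) (by omega) (by omega),
      hrr, Icc_self, Finset.prod_singleton]
  unfold Pfun
  rw [mul_add, mul_add]
  congr 1
  · congr 1
    · -- first term of Pfun gives DK r l 1
      rw [DK, if_pos rfl, Ssum_eq]
      unfold CK
      rw [hProd]
      have hcomb := prod_mul_zpow (Icc 1 (r-1)) (fun j => l (j+1))
      calc ((∏ j ∈ Icc 1 (r-1), uvar j) * uvar r) *
            ((-SK r 1) ^ ((l 1 : ℤ) - 1) * ∏ j ∈ Icc 1 (r - 1), uvar j ^ ((l (j+1) : ℤ) - 1))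
          = (-SK r 1) ^ ((l 1 : ℤ) - 1) * (uvar r *
              ((∏ j ∈ Icc 1 (r-1), uvar j) * ∏ j ∈ Icc 1 (r - 1), uvar j ^ ((l (j+1) : ℤ) - 1))) := by
            ring
        _ = (-SK r 1) ^ ((l 1 : ℤ) - 1) * (uvar r * ∏ j ∈ Icc 1 (r-1), uvar j ^ l (j+1)) := by
            rw [hcomb]
    · -- middle terms
      rw [Finset.mul_sum]
      refine Finset.sum_congr rfl (fun i hi => ?_)
      obtain ⟨hi1, hi2⟩ := Finset.mem_Icc.mp hi
      have hir : i ≤ r - 1 := hi2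
      have hr2 : 2 ≤ r := by omega
      have hp1 : (∏ j ∈ Icc 1 r, uvar j) = (∏ j ∈ Icc 1 (i-1), uvar j) * uvar i *
          (∏ j ∈ Icc (i+1) (r-1), uvar j) * uvar r := by
        rw [prod_Icc_split (fun j => uvar j) (a := 1) (c := i-1) (b := r) (by omega) (by omega),
          show i - 1 + 1 = i by omega,
          prod_Icc_split (fun j => uvar j) (a := i) (c := i) (b := r) (by omega) (by omega),
          Icc_self, Finset.prod_singleton,
          prod_Icc_split (fun j => uvar j) (a := i+1) (c := r-1) (b := r) (by omega) (by omega),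
          hrr, Icc_self, Finset.prod_singleton]
        ring
      have hA : (∏ j ∈ Icc 1 (i-1), uvar j) * (∏ j ∈ Icc 1 (i-1), uvar j ^ ((l j : ℤ) - 1))
          = AK l i := prod_mul_zpow _ _
      have hC : (∏ j ∈ Icc (i+1) (r-1), uvar j) *
            (∏ j ∈ Icc (i+1) (r-1), uvar j ^ ((l (j+1) : ℤ) - 1))
          = ∏ j ∈ Icc (i+1) (r-1), uvar j ^ l (j+1) := prod_mul_zpow _ _
      have hsi : uvar i = SK r i + (-SK r (i+1)) := by
        rw [SK_succ (by omega : i ≤ r)]; ring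
      have e1 : SK r i * SK r i ^ ((l i : ℤ) - 1) = SK r i ^ (l i) := by
        rw [mul_comm, zpow_fix _ (SK_ne_zero (by omega) (by omega))]
      have e2 : (-SK r (i+1)) * (-SK r (i+1)) ^ ((l (i+1) : ℤ) - 1) = (-SK r (i+1)) ^ (l (i+1)) := by
        rw [mul_comm, zpow_fix _ (negSK_ne_zero (by omega) (by omega))]
      rw [Ssum_eq, Ssum_eq, hp1]
      unfold EK DK
      rw [if_neg (by omega : ¬ i = r), if_neg (by omega : ¬ i + 1 = 1),
        show i + 1 - 1 = i by omega]
      unfold CK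
      set x1 := SK r i ^ ((l i : ℤ) - 1) with hx1
      set x2 := (-SK r (i+1)) ^ ((l (i+1) : ℤ) - 1) with hx2
      set P1 := ∏ j ∈ Icc 1 (i-1), uvar j with hP1
      set P1' := ∏ j ∈ Icc 1 (i-1), uvar j ^ ((l j : ℤ) - 1) with hP1'
      set P3 := ∏ j ∈ Icc (i+1) (r-1), uvar j with hP3
      set P3' := ∏ j ∈ Icc (i+1) (r-1), uvar j ^ ((l (j+1) : ℤ) - 1) with hP3'
      set P3n := ∏ j ∈ Icc (i+1) (r-1), uvar j ^ l (j+1) with hP3n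
      -- goal: (P1 * uvar i * P3 * uvar r) * (P1' * x1 * x2 * P3')
      --     = AK l i * x1 * (-SK r (i+1))^(l (i+1)) * (uvar r * P3n)
      --       + AK l i * SK r i ^ (l i) * x2 * (uvar r * P3n)
      linear_combination (uvar i * x1 * x2 * P3 * uvar r * P3') * hA
        + (AK l i * uvar i * x1 * x2 * uvar r) * hC
        + (AK l i * (uvar r * P3n) * x1 * x2) * hsi
        + (AK l i * (uvar r * P3n) * x1) * e2
        + (AK l i * (uvar r * P3n) * x2) * e1
  · -- last term of Pfun gives EK r l r
    rw [EK, if_pos rfl, SK_last]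
    unfold AK
    rw [hProd]
    have hcomb := prod_mul_zpow (Icc 1 (r-1)) l
    calc ((∏ j ∈ Icc 1 (r-1), uvar j) * uvar r) *
          ((∏ j ∈ Icc 1 (r - 1), uvar j ^ ((l j : ℤ) - 1)) * uvar r ^ ((l r : ℤ) - 1))
        = ((∏ j ∈ Icc 1 (r-1), uvar j) * ∏ j ∈ Icc 1 (r - 1), uvar j ^ ((l j : ℤ) - 1)) *
            uvar r ^ ((l r : ℤ) - 1) * uvar r := by ring
      _ = (∏ j ∈ Icc 1 (r - 1), uvar j ^ l j) * uvar r ^ ((l r : ℤ) - 1) * uvar r := by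
          rw [hcomb]

/-! ### Step B : each piece is an integral homogeneous polynomial -/

lemma d_split (l : ℕ → ℕ) {i r : ℕ} (h1 : 1 ≤ i) (h2 : i ≤ r) :
    ∑ j ∈ Icc 1 r, l j = (∑ j ∈ Icc 1 (i-1), l j) + (l i + ∑ j ∈ Icc (i+1) r, l j) := by
  rw [sum_Icc_split l (a := 1) (c := i-1) (b := r) (by omega) (by omega),
    show i - 1 + 1 = i by omega,
    sum_Icc_split l (a := i) (c := i) (b := r) (by omega) h2, Icc_self, Finset.sum_singleton]

lemma PC_homog' {r : ℕ} (l : ℕ → ℕ) (i : ℕ) (hr : 1 ≤ r) :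
    (PC r l i).IsHomogeneous ((∑ j ∈ Icc (i+2) r, l j) + 1) := by
  have h := PC_homog r l i
  rwa [sum_Icc_shift l (i+1) (r-1), show r - 1 + 1 = r by omega, add_comm] at h

lemma GP_mul_homog {P Q : MvPolynomial ℕ ℤ} (hP : P.IsHomogeneous 1) (hQ : Q.IsHomogeneous 1)
    (m : ℕ) {R : MvPolynomial ℕ ℤ} {n : ℕ} (hR : R.IsHomogeneous (n+1)) :
    (R * GP P Q m).IsHomogeneous (n + m) := by
  by_cases hm : m = 0
  · subst hm
    have h0 : GP P Q 0 = 0 := by simp [GP]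
    rw [h0, mul_zero]
    exact MvPolynomial.isHomogeneous_zero _ _ _
  · have h := hR.mul (GP_homog hP hQ m)
    rwa [show n + 1 + (m - 1) = n + m by omega] at h

lemma AK_one (l : ℕ → ℕ) : AK l 1 = 1 := by
  unfold AK
  rw [show (1:ℕ) - 1 = 0 from rfl, Finset.Icc_eq_empty (by omega), Finset.prod_empty]

lemma neg_inv_mul_self {x : K₀} (hx : x ≠ 0) : (-x)⁻¹ * x = -1 := by
  rw [inv_neg, neg_mul, inv_mul_cancel₀ hx]

lemma stepB (r : ℕ) (hr : 1 ≤ r) (l : ℕ → ℕ) (i : ℕ) :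
    ∃ q : MvPolynomial ℕ ℤ, q.IsHomogeneous (∑ j ∈ Icc 1 r, l j) ∧
      (i ∈ Icc 1 r → phi q = DK r l i + EK r l i) := by
  by_cases hmem : i ∈ Icc 1 r
  swap
  · exact ⟨0, MvPolynomial.isHomogeneous_zero _ _ _, fun h => absurd h hmem⟩
  obtain ⟨hi1, hi2⟩ := Finset.mem_Icc.mp hmem
  have hd := d_split l hi1 hi2
  by_cases hl : l i = 0
  swap
  · -- the case `l i ≠ 0` : no division occurs
    refine ⟨(if i = 1 then (-PS r 1)^(l 1 - 1) * PC r l 0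
          else PA l (i-1) * PS r (i-1)^(l (i-1)) * ((-PS r i)^(l i - 1)) * PC r l (i-1))
        + (if i = r then PA l r * PS r r^(l r - 1) * PS r r
          else PA l i * PS r i^(l i - 1) * ((-PS r (i+1))^(l (i+1))) * PC r l i),
        ?_, fun _ => ?_⟩
    · apply MvPolynomial.IsHomogeneous.add
      · by_cases h1 : i = 1
        · subst h1
          rw [if_pos rfl]
          have h := (((PS_homog r 1).neg.pow (l 1 - 1)).mul (PC_homog' l 0 hr))
          rwa [show 1 * (l 1 - 1) + ((∑ j ∈ Icc (0+2) r, l j) + 1) = ∑ j ∈ Icc 1 r, l j by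
            rw [hd, show ∑ j ∈ Icc 1 (1-1), l j = 0 by
                rw [show (1:ℕ)-1 = 0 from rfl, Finset.Icc_eq_empty (by omega), Finset.sum_empty],
              show (0:ℕ)+2 = 1+1 from rfl]
            omega] at h
        · rw [if_neg h1]
          have h := (((PA_homog l (i-1)).mul ((PS_homog r (i-1)).pow (l (i-1)))).mul
            ((((PS_homog r i).neg.pow (l i - 1))))).mul (PC_homog' l (i-1) hr)
          have e1 : ∑ j ∈ Icc 1 (i-1), l j = (∑ j ∈ Icc 1 (i-1-1), l j) + l (i-1) := by
            rw [sum_Icc_split l (a := 1) (c := i-1-1) (b := i-1) (by omega) (by omega),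
              show i-1-1+1 = i-1 by omega, Icc_self, Finset.sum_singleton]
          rwa [show i-1+2 = i+1 by omega,
            show (∑ j ∈ Icc 1 (i-1-1), l j) + 1 * (l (i-1)) + 1 * (l i - 1)
              + ((∑ j ∈ Icc (i+1) r, l j) + 1) = ∑ j ∈ Icc 1 r, l j by
              rw [hd, e1]; omega] at h
      · by_cases h2 : i = r
        · subst h2
          rw [if_pos rfl]
          have h := ((PA_homog l i).mul ((PS_homog i i).pow (l i - 1))).mul (PS_homog i i)
          have e2 : ∑ j ∈ Icc (i+1) i, l j = 0 := by
            rw [Finset.Icc_eq_empty (by omega), Finset.sum_empty]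
          rwa [show (∑ j ∈ Icc 1 (i-1), l j) + 1 * (l i - 1) + 1 = ∑ j ∈ Icc 1 i, l j by
            rw [hd, e2]; omega] at h
        · rw [if_neg h2]
          have h := (((PA_homog l i).mul ((PS_homog r i).pow (l i - 1))).mul
            ((PS_homog r (i+1)).neg.pow (l (i+1)))).mul (PC_homog' l i hr)
          have e3 : ∑ j ∈ Icc (i+1) r, l j = l (i+1) + ∑ j ∈ Icc (i+2) r, l j := by
            rw [sum_Icc_split l (a := i+1) (c := i+1) (b := r) (by omega) (by omega),
              Icc_self, Finset.sum_singleton]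
          rwa [show (∑ j ∈ Icc 1 (i-1), l j) + 1 * (l i - 1) + 1 * (l (i+1))
            + ((∑ j ∈ Icc (i+2) r, l j) + 1) = ∑ j ∈ Icc 1 r, l j by
            rw [hd, e3]; omega] at h
    · rw [map_add]
      congr 1
      · by_cases h1 : i = 1
        · subst h1
          rw [if_pos rfl]
          simp only [map_mul, map_pow, map_neg, phi_PS, phi_PC]
          unfold DK
          rw [if_pos rfl, zpow_of_ne _ hl]
        · rw [if_neg h1]
          simp only [map_mul, map_pow, map_neg, phi_PS, phi_PC, phi_PA]
          unfold DK
          rw [if_neg h1, zpow_of_ne _ hl]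
      · by_cases h2 : i = r
        · subst h2
          rw [if_pos rfl]
          simp only [map_mul, map_pow, map_neg, phi_PS, phi_PA]
          unfold EK
          rw [if_pos rfl, zpow_of_ne _ hl]
        · rw [if_neg h2]
          simp only [map_mul, map_pow, map_neg, phi_PS, phi_PC, phi_PA]
          unfold EK
          rw [if_neg h2, zpow_of_ne _ hl]
  · -- the case `l i = 0`
    have hexp : (l i : ℤ) - 1 = -1 := by rw [hl]; norm_num
    by_cases h1 : i = 1
    · subst h1
      by_cases hr1 : r = 1
      · -- i = 1 = r
        subst hr1
        refine ⟨0, MvPolynomial.isHomogeneous_zero _ _ _, fun _ => ?_⟩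
        rw [map_zero]
        unfold DK EK
        rw [if_pos rfl, if_pos rfl, hexp, zpow_neg_one, zpow_neg_one, AK_one, SK_last]
        have hC : CK 1 l 0 = uvar 1 := by
          unfold CK
          rw [show (1:ℕ)-1 = 0 from rfl, Finset.Icc_eq_empty (by omega), Finset.prod_empty,
            mul_one]
        rw [hC]
        have hu := uvar_ne_zero 1
        have hinv1 := neg_inv_mul_self hu
        have hinv2 := inv_mul_cancel₀ hu
        linear_combination (-1 : K₀) * hinv1 + (-1 : K₀) * hinv2
      · -- i = 1 < r
        have hr2 : 2 ≤ r := by omega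
        refine ⟨-(PC r l 1) * GP (MvPolynomial.X 1) (-PS r 2) (l 2), ?_, fun _ => ?_⟩
        · have h := GP_mul_homog (MvPolynomial.isHomogeneous_X ℤ 1) ((PS_homog r 2).neg)
            (l 2) ((PC_homog' l 1 hr).neg)
          rwa [show (∑ j ∈ Icc (1+2) r, l j) + l 2 = ∑ j ∈ Icc 1 r, l j by
            rw [hd, show ∑ j ∈ Icc 1 (1-1), l j = 0 by
                rw [show (1:ℕ)-1 = 0 from rfl, Finset.Icc_eq_empty (by omega), Finset.sum_empty],
              show ∑ j ∈ Icc (1+1) r, l j = l 2 + ∑ j ∈ Icc (1+2) r, l j by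
                rw [sum_Icc_split l (a := 1+1) (c := 1+1) (b := r) (by omega) (by omega),
                  Icc_self, Finset.sum_singleton]
              ]
            omega] at h
        · apply mul_right_cancel₀ (SK_ne_zero (le_refl 1) hr)
          simp only [map_mul, map_neg, phi_PC, phi_GP, phi_PS, phi_X]
          set Gb := ∑ k ∈ range (l 2), uvar 1 ^ k * (-SK r 2) ^ (l 2 - 1 - k) with hGb
          have hgb : Gb * SK r 1 = uvar 1 ^ (l 2) - (-SK r 2) ^ (l 2) := by
            have h := geom_sum₂_mul (uvar 1) (-SK r 2) (l 2)
            rwa [show uvar 1 - -SK r 2 = SK r 1 by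
              rw [SK_succ (show (1:ℕ) ≤ r by omega)]; ring] at h
          unfold DK EK
          rw [if_pos rfl, if_neg (show ¬ (1:ℕ) = r by omega), hexp, zpow_neg_one,
            zpow_neg_one, AK_one]
          have hCK0 : CK r l 0 = uvar 1 ^ l 2 * CK r l 1 := by
            have h := CK_pred (r := r) (i := 1) l (le_refl 1) (by omega)
            rwa [show (1:ℕ)-1 = 0 from rfl, show (1:ℕ)+1 = 2 from rfl] at h
          have hinv1 : (-SK r 1)⁻¹ * SK r 1 = -1 := neg_inv_mul_self (SK_ne_zero (le_refl 1) hr)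
          have hinv2 : (SK r 1)⁻¹ * SK r 1 = 1 := inv_mul_cancel₀ (SK_ne_zero (le_refl 1) hr)
          linear_combination (-(CK r l 1)) * hgb + (-(CK r l 0)) * hinv1
            + (-((-SK r 2) ^ (l 2) * CK r l 1)) * hinv2 + hCK0
    · -- 2 ≤ i
      have hi2' : 2 ≤ i := by omega
      by_cases hir : i = r
      · -- i = r, l r = 0, r ≥ 2
        subst hir
        refine ⟨-(PA l (i-1) * PS i i) * GP (PS i (i-1)) (MvPolynomial.X (i-1)) (l (i-1)),
          ?_, fun _ => ?_⟩
        · have h := GP_mul_homog (PS_homog i (i-1)) (MvPolynomial.isHomogeneous_X ℤ (i-1))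
            (l (i-1)) (((PA_homog l (i-1)).mul (PS_homog i i)).neg)
          rwa [show (∑ j ∈ Icc 1 (i-1-1), l j) + l (i-1) = ∑ j ∈ Icc 1 i, l j by
            rw [hd, show ∑ j ∈ Icc 1 (i-1), l j = (∑ j ∈ Icc 1 (i-1-1), l j) + l (i-1) by
                rw [sum_Icc_split l (a := 1) (c := i-1-1) (b := i-1) (by omega) (by omega),
                  show i-1-1+1 = i-1 by omega, Icc_self, Finset.sum_singleton],
              show ∑ j ∈ Icc (i+1) i, l j = 0 by
                rw [Finset.Icc_eq_empty (by omega), Finset.sum_empty]]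
            omega] at h
        · simp only [map_mul, map_neg, phi_PA, phi_PS, phi_GP, phi_X]
          set Ga := ∑ k ∈ range (l (i-1)), SK i (i-1) ^ k * uvar (i-1) ^ (l (i-1) - 1 - k)
            with hGa
          have hga : Ga * SK i i = SK i (i-1) ^ (l (i-1)) - uvar (i-1) ^ (l (i-1)) := by
            have h := geom_sum₂_mul (SK i (i-1)) (uvar (i-1)) (l (i-1))
            rwa [show SK i (i-1) - uvar (i-1) = SK i i by
              rw [SK_succ (show i-1 ≤ i by omega), show i-1+1 = i by omega]; ring] at h
          unfold DK EK
          rw [if_neg h1, if_pos rfl, hexp, zpow_neg_one, zpow_neg_one]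
          have hCK : CK i l (i-1) = uvar i := by
            unfold CK
            rw [show i-1+1 = i by omega, Finset.Icc_eq_empty (by omega), Finset.prod_empty,
              mul_one]
          have hAK : AK l i = AK l (i-1) * uvar (i-1) ^ (l (i-1)) := by
            have h := AK_succ l (i := i-1) (by omega)
            rwa [show i-1+1 = i by omega] at h
          have hSi : SK i i = uvar i := SK_last i
          have hu := uvar_ne_zero i
          rw [hSi] at hga
          rw [hCK, hSi]
          have hinv1 : (-uvar i)⁻¹ * uvar i = -1 := neg_inv_mul_self hu
          have hinv2 : (uvar i)⁻¹ * uvar i = 1 := inv_mul_cancel₀ hu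
          linear_combination (-(AK l (i-1))) * hga
            + (-(AK l (i-1) * SK i (i-1) ^ (l (i-1)))) * hinv1
            + (-(AK l i)) * hinv2 - hAK
      · -- 1 < i < r
        have hirlt : i ≤ r - 1 := by omega
        refine ⟨-(PA l (i-1) * PC r l i * MvPolynomial.X i ^ (l (i+1)))
            * GP (PS r (i-1)) (MvPolynomial.X (i-1)) (l (i-1))
          + -(PA l (i-1) * PC r l i * MvPolynomial.X (i-1) ^ (l (i-1)))
            * GP (MvPolynomial.X i) (-PS r (i+1)) (l (i+1)), ?_, fun _ => ?_⟩
        · have e1 : ∑ j ∈ Icc 1 (i-1), l j = (∑ j ∈ Icc 1 (i-1-1), l j) + l (i-1) := by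
            rw [sum_Icc_split l (a := 1) (c := i-1-1) (b := i-1) (by omega) (by omega),
              show i-1-1+1 = i-1 by omega, Icc_self, Finset.sum_singleton]
          have e3 : ∑ j ∈ Icc (i+1) r, l j = l (i+1) + ∑ j ∈ Icc (i+2) r, l j := by
            rw [sum_Icc_split l (a := i+1) (c := i+1) (b := r) (by omega) (by omega),
              Icc_self, Finset.sum_singleton]
          apply MvPolynomial.IsHomogeneous.add
          · have hR := (((PA_homog l (i-1)).mul (PC_homog' l i hr)).mul
              ((MvPolynomial.isHomogeneous_X ℤ i).pow (l (i+1)))).neg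
            rw [show (∑ j ∈ Icc 1 (i-1-1), l j) + ((∑ j ∈ Icc (i+2) r, l j) + 1)
              + 1 * (l (i+1))
              = ((∑ j ∈ Icc 1 (i-1-1), l j) + (∑ j ∈ Icc (i+2) r, l j) + l (i+1)) + 1 by
              omega] at hR
            have h := GP_mul_homog (PS_homog r (i-1)) (MvPolynomial.isHomogeneous_X ℤ (i-1))
              (l (i-1)) hR
            rwa [show (∑ j ∈ Icc 1 (i-1-1), l j) + (∑ j ∈ Icc (i+2) r, l j) + l (i+1)
              + l (i-1) = ∑ j ∈ Icc 1 r, l j by rw [hd, e1, e3]; omega] at h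
          · have hR := (((PA_homog l (i-1)).mul (PC_homog' l i hr)).mul
              ((MvPolynomial.isHomogeneous_X ℤ (i-1)).pow (l (i-1)))).neg
            rw [show (∑ j ∈ Icc 1 (i-1-1), l j) + ((∑ j ∈ Icc (i+2) r, l j) + 1)
              + 1 * (l (i-1))
              = ((∑ j ∈ Icc 1 (i-1-1), l j) + (∑ j ∈ Icc (i+2) r, l j) + l (i-1)) + 1 by
              omega] at hR
            have h := GP_mul_homog (MvPolynomial.isHomogeneous_X ℤ i) ((PS_homog r (i+1)).neg)
              (l (i+1)) hR
            rwa [show (∑ j ∈ Icc 1 (i-1-1), l j) + (∑ j ∈ Icc (i+2) r, l j) + l (i-1)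
              + l (i+1) = ∑ j ∈ Icc 1 r, l j by rw [hd, e1, e3]; omega] at h
        · apply mul_right_cancel₀ (SK_ne_zero hi1 hi2)
          simp only [map_add, map_mul, map_neg, map_pow, phi_PA, phi_PC, phi_PS, phi_GP, phi_X]
          set Ga := ∑ k ∈ range (l (i-1)), SK r (i-1) ^ k * uvar (i-1) ^ (l (i-1) - 1 - k)
            with hGa
          set Gb := ∑ k ∈ range (l (i+1)), uvar i ^ k * (-SK r (i+1)) ^ (l (i+1) - 1 - k)
            with hGb
          have hga : Ga * SK r i = SK r (i-1) ^ (l (i-1)) - uvar (i-1) ^ (l (i-1)) := by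
            have h := geom_sum₂_mul (SK r (i-1)) (uvar (i-1)) (l (i-1))
            rwa [show SK r (i-1) - uvar (i-1) = SK r i by
              rw [SK_succ (show i-1 ≤ r by omega), show i-1+1 = i by omega]; ring] at h
          have hgb : Gb * SK r i = uvar i ^ (l (i+1)) - (-SK r (i+1)) ^ (l (i+1)) := by
            have h := geom_sum₂_mul (uvar i) (-SK r (i+1)) (l (i+1))
            rwa [show uvar i - -SK r (i+1) = SK r i by
              rw [SK_succ (show i ≤ r by omega)]; ring] at h
          unfold DK EK
          rw [if_neg h1, if_neg hir, hexp, zpow_neg_one, zpow_neg_one]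
          have hCK : CK r l (i-1) = uvar i ^ l (i+1) * CK r l i := CK_pred l hi1 hirlt
          have hAK : AK l i = AK l (i-1) * uvar (i-1) ^ (l (i-1)) := by
            have h := AK_succ l (i := i-1) (by omega)
            rwa [show i-1+1 = i by omega] at h
          have hinv1 : (-SK r i)⁻¹ * SK r i = -1 := neg_inv_mul_self (SK_ne_zero hi1 hi2)
          have hinv2 : (SK r i)⁻¹ * SK r i = 1 := inv_mul_cancel₀ (SK_ne_zero hi1 hi2)
          linear_combination (-(AK l (i-1) * CK r l i * uvar i ^ (l (i+1)))) * hga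
            + (-(AK l (i-1) * CK r l i * uvar (i-1) ^ (l (i-1)))) * hgb
            + (-(AK l (i-1) * SK r (i-1) ^ (l (i-1)) * CK r l (i-1))) * hinv1
            + (-(AK l i * (-SK r (i+1)) ^ (l (i+1)) * CK r l i)) * hinv2
            + (AK l (i-1) * SK r (i-1) ^ (l (i-1))) * hCK
            + (-((-SK r (i+1)) ^ (l (i+1)) * CK r l i)) * hAK

/-- For any `l = (l_1,…,l_r) ∈ ℕ₀^r`, the rational function `u_1⋯u_r · P_l(u_1,…,u_r)` is a
polynomial with integer coefficients, homogeneous of degree `l_1 + ⋯ + l_r`. -/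
theorem uP_integral_homogeneous (r : ℕ) (hr : 1 ≤ r) (l : ℕ → ℕ) :
    ∃ p : MvPolynomial ℕ ℤ,
      p.IsHomogeneous (∑ j ∈ Finset.Icc 1 r, l j) ∧
      intPolyMap p = (∏ j ∈ Finset.Icc 1 r, uvar j) * Pfun K₀ r l uvar := by
  choose q hq1 hq2 using stepB r hr l
  refine ⟨∑ i ∈ Icc 1 r, q i, MvPolynomial.IsHomogeneous.sum _ _ _ (fun i _ => hq1 i), ?_⟩
  rw [intPolyMap_eq, map_sum, stepA r hr l]
  exact Finset.sum_congr rfl (fun i hi => hq2 i hi)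
end

section
/- If l_1 ∈ ℕ₀ is even and r ≥ 2, then in ℚ(u_1,…,u_r) one has P_{l_1,1,l_3,…,l_r}(u_1,…,u_r) = u_1^{l_1−1} ( P_{1,l_3,…,l_r}(u_2,…,u_r) − u_2^{l_3−1} ⋯ u_{r-1}^{l_r−1} ). -/
open Finset

lemma prod_shift {K : Type*} [Field K] (a b : ℕ) (f : ℕ → K) :
    ∏ j ∈ Finset.Icc a b, f (j + 1) = ∏ j ∈ Finset.Icc (a + 1) (b + 1), f j := by
  rw [← Finset.map_add_right_Icc a b 1, Finset.prod_map]; rfl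

lemma sum_shift {K : Type*} [Field K] (a b : ℕ) (f : ℕ → K) :
    ∑ j ∈ Finset.Icc a b, f (j + 1) = ∑ j ∈ Finset.Icc (a + 1) (b + 1), f j := by
  rw [← Finset.map_add_right_Icc a b 1, Finset.sum_map]; rfl

lemma Ssum_shift (K : Type*) [Field K] (r : ℕ) (u : ℕ → K) (i : ℕ) :
    Ssum K r (fun j => u (j + 1)) i = Ssum K (r + 1) u (i + 1) := by
  unfold Ssum; exact sum_shift i r u

lemma key (K : Type*) [Field K] (m : ℕ) (l : ℕ → ℕ) (u : ℕ → K)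
    (hl1 : Even (l 1)) (hl2 : l 2 = 1) :
    Pfun K (m + 2) l u =
      u 1 ^ ((l 1 : ℤ) - 1) *
        (Pfun K (m + 1) (fun j => l (j + 1)) (fun j => u (j + 1))
          - ∏ j ∈ Finset.Icc 2 (m + 1), u j ^ ((l (j + 1) : ℤ) - 1)) := by
  have hodd : Odd ((l 1 : ℤ) - 1) := by
    obtain ⟨k, hk⟩ := hl1
    exact ⟨k - 1, by push_cast [hk]; ring⟩
  have hins : ∀ n : ℕ, 1 ≤ n → Finset.Icc 1 n = insert 1 (Finset.Icc 2 n) := by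
    intro n hn; ext x; simp [Finset.mem_Icc]; omega
  have hnot : ∀ n : ℕ, (1 : ℕ) ∉ Finset.Icc 2 n := by intro n; simp
  unfold Pfun
  simp only [show m + 2 - 1 = m + 1 from rfl, show m + 1 - 1 = m from rfl,
    Ssum_shift, hl2]
  simp only [show ((1 : ℕ) : ℤ) - 1 = 0 from rfl, zpow_zero, one_mul, mul_one]
  -- set F, the common summand
  set F : ℕ → K := fun i =>
    (∏ j ∈ Finset.Icc 2 (i - 1), u j ^ ((l j : ℤ) - 1))
      * Ssum K (m + 2) u i ^ ((l i : ℤ) - 1)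
      * (-Ssum K (m + 2) u (i + 1)) ^ ((l (i + 1) : ℤ) - 1)
      * ∏ j ∈ Finset.Icc (i + 1) (m + 1), u j ^ ((l (j + 1) : ℤ) - 1) with hF
  -- RHS pieces
  have hR1 : ∏ x ∈ Finset.Icc 1 m, u (x + 1) ^ ((l (x + 1 + 1) : ℤ) - 1)
      = ∏ x ∈ Finset.Icc 2 (m + 1), u x ^ ((l (x + 1) : ℤ) - 1) :=
    prod_shift 1 m (fun j => u j ^ ((l (j + 1) : ℤ) - 1))
  have hR3 : ∏ x ∈ Finset.Icc 1 m, u (x + 1) ^ ((l (x + 1) : ℤ) - 1)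
      = ∏ x ∈ Finset.Icc 2 (m + 1), u x ^ ((l x : ℤ) - 1) :=
    prod_shift 1 m (fun j => u j ^ ((l j : ℤ) - 1))
  have hR2 : (∑ x ∈ Finset.Icc 1 m,
        (∏ j ∈ Finset.Icc 1 (x - 1), u (j + 1) ^ ((l (j + 1) : ℤ) - 1)) *
            Ssum K (m + 1 + 1) u (x + 1) ^ ((l (x + 1) : ℤ) - 1) *
          (-Ssum K (m + 1 + 1) u (x + 1 + 1)) ^ ((l (x + 1 + 1) : ℤ) - 1) *
        ∏ j ∈ Finset.Icc (x + 1) m, u (j + 1) ^ ((l (j + 1 + 1) : ℤ) - 1))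
      = ∑ i ∈ Finset.Icc 2 (m + 1), F i := by
    rw [← sum_shift 1 m F]
    apply Finset.sum_congr rfl
    intro x hx
    obtain ⟨hx1, hx2⟩ := Finset.mem_Icc.mp hx
    rw [hF]
    simp only
    rw [prod_shift 1 (x - 1) (fun j => u j ^ ((l j : ℤ) - 1)),
        prod_shift (x + 1) m (fun j => u j ^ ((l (j + 1) : ℤ) - 1)),
        show x - 1 + 1 = x from by omega, show x + 1 - 1 = x from rfl]
  rw [hR1, hR3, hR2]
  -- LHS pieces
  rw [hins (m + 1) (by omega), Finset.prod_insert (hnot _), Finset.sum_insert (hnot _),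
      Finset.prod_insert (hnot _)]
  simp only [show (1 : ℕ) + 1 = 2 from rfl, hl2, show ((1 : ℕ) : ℤ) - 1 = 0 from rfl,
    zpow_zero, one_mul, mul_one, show (1 : ℕ) - 1 = 0 from rfl,
    show Finset.Icc 1 0 = (∅ : Finset ℕ) from rfl, Finset.prod_empty]
  rw [hodd.neg_zpow]
  have hL : ∑ x ∈ Finset.Icc 2 (m + 1),
      (∏ j ∈ Finset.Icc 1 (x - 1), u j ^ ((l j : ℤ) - 1)) *
          Ssum K (m + 2) u x ^ ((l x : ℤ) - 1) *
        (-Ssum K (m + 2) u (x + 1)) ^ ((l (x + 1) : ℤ) - 1) *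
        ∏ j ∈ Finset.Icc (x + 1) (m + 1), u j ^ ((l (j + 1) : ℤ) - 1)
      = u 1 ^ ((l 1 : ℤ) - 1) * ∑ i ∈ Finset.Icc 2 (m + 1), F i := by
    rw [Finset.mul_sum]
    apply Finset.sum_congr rfl
    intro x hx
    obtain ⟨hx1, hx2⟩ := Finset.mem_Icc.mp hx
    rw [hF]
    simp only
    rw [hins (x - 1) (by omega), Finset.prod_insert (hnot _)]
    ring
  rw [hL]
  ring

/-- If `l_1` is even (here `l = (l_1, 1, l_3, …, l_r)`, encoded by `l 2 = 1`) and `r ≥ 2`,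
then `P_{l_1,1,l_3,…,l_r}(u_1,…,u_r)
= u_1^{l_1−1}(P_{1,l_3,…,l_r}(u_2,…,u_r) − u_2^{l_3−1}⋯u_{r-1}^{l_r−1})`
in `ℚ(u_1,…,u_r)`. -/
theorem P_even_first (r : ℕ) (hr : 2 ≤ r) (l : ℕ → ℕ) (hl1 : Even (l 1)) (hl2 : l 2 = 1) :
    Pfun K₀ r l uvar =
      uvar 1 ^ ((l 1 : ℤ) - 1) *
        (Pfun K₀ (r - 1) (fun j => l (j + 1)) (fun j => uvar (j + 1))
          - ∏ j ∈ Finset.Icc 2 (r - 1), uvar j ^ ((l (j + 1) : ℤ) - 1)) := by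
  obtain ⟨m, rfl⟩ : ∃ m, r = m + 2 := ⟨r - 2, by omega⟩
  exact key K₀ m l uvar hl1 hl2
end

section
/- Let A be a commutative ℚ-algebra and I : List ℕ → A satisfy the shuffle relations and I(1) = 0 (where (1) denotes the length-one word with entry 1). Then for any word (k_1,…,k_n) and any m ≥ 1, I(k_1,…,k_n, 1,1,…,1) [with m trailing 1's] = ((−1)^m / m!) · I(w), where w is the word obtained by shuffling the word (1,1,…,1) (m ones) with (k_1,…,k_{n-1}) inside the shuffle algebra and then concatenating k_n at the end; here I is extended linearly to formal ℚ-linear combinations of words. -/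
noncomputable def shuffleW : List ℕ → List ℕ → (List ℕ →₀ ℚ)
  | [], w => Finsupp.single w 1
  | v, [] => Finsupp.single v 1
  | a :: v, b :: w =>
      Finsupp.mapDomain (a :: ·) (shuffleW v (b :: w))
        + Finsupp.mapDomain (b :: ·) (shuffleW (a :: v) w)
  termination_by v w => v.length + w.length

noncomputable def Iext {A : Type*} [AddCommMonoid A] [Module ℚ A] (I : List ℕ → A)
    (x : List ℕ →₀ ℚ) : A :=
  x.sum fun w c => c • I w

noncomputable def shExt (x y : List ℕ →₀ ℚ) : List ℕ →₀ ℚ :=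
  x.sum fun v a => y.sum fun w b => (a * b) • shuffleW v w

/-! Auxiliary lemmas -/

lemma Iext_eq_lift {A : Type*} [AddCommMonoid A] [Module ℚ A] (I : List ℕ → A)
    (x : List ℕ →₀ ℚ) : Iext I x = Finsupp.lift A ℚ (List ℕ) I x := by
  rw [Finsupp.lift_apply]; rfl

noncomputable def shL : (List ℕ →₀ ℚ) →ₗ[ℚ] (List ℕ →₀ ℚ) :=
  Finsupp.lift _ ℚ (List ℕ) (fun w => shuffleW [1] w)

lemma shL_single (w : List ℕ) : shL (Finsupp.single w 1) = shuffleW [1] w := by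
  simp [shL]

lemma shExt_one (y : List ℕ →₀ ℚ) : shExt (Finsupp.single [1] 1) y = shL y := by
  rw [shExt, shL, Finsupp.lift_apply, Finsupp.sum_single_index]
  · simp
  · simp

lemma shuffleW_nil (w : List ℕ) : shuffleW [] w = Finsupp.single w 1 := by
  simp [shuffleW]

lemma shuffleW_one_nil : shuffleW [1] [] = Finsupp.single [1] 1 := by
  simp [shuffleW]

lemma shuffleW_one_cons (b : ℕ) (w : List ℕ) :
    shuffleW [1] (b :: w)
      = Finsupp.single (1 :: b :: w) 1 + Finsupp.mapDomain (b :: ·) (shuffleW [1] w) := by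
  rw [shuffleW]
  simp [shuffleW, Finsupp.mapDomain_single]

lemma shuffleW_one_ones (j : ℕ) :
    shuffleW [1] (List.replicate j 1)
      = ((j : ℚ) + 1) • Finsupp.single (List.replicate (j + 1) 1) 1 := by
  induction j with
  | zero => simp [shuffleW]
  | succ j ih =>
      rw [List.replicate_succ, shuffleW_one_cons, ih]
      rw [Finsupp.mapDomain_smul, Finsupp.mapDomain_single]
      rw [show (1 :: List.replicate (j + 1) 1) = List.replicate (j + 1 + 1) 1 by
        rw [← List.replicate_succ]]
      rw [show (1 :: 1 :: List.replicate j 1) = List.replicate (j + 1 + 1) 1 by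
        simp [List.replicate_succ]]
      rw [Nat.cast_succ]
      module

lemma shuffleW_one_key (ks : List ℕ) (kn : ℕ) (j : ℕ) :
    shuffleW [1] (ks ++ [kn] ++ List.replicate j 1)
      = ((j : ℚ) + 1) • Finsupp.single (ks ++ [kn] ++ List.replicate (j + 1) 1) 1
        + Finsupp.mapDomain (· ++ [kn] ++ List.replicate j 1) (shuffleW [1] ks) := by
  induction ks with
  | nil =>
      simp only [List.nil_append]
      rw [show ([kn] ++ List.replicate j 1) = kn :: List.replicate j 1 by simp,
        shuffleW_one_cons, shuffleW_one_ones, Finsupp.mapDomain_smul, Finsupp.mapDomain_single,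
        shuffleW_one_nil, Finsupp.mapDomain_single]
      simp only [List.nil_append, List.singleton_append, List.cons_append]
      abel
  | cons a t ih =>
      have h1 : (a :: t) ++ [kn] ++ List.replicate j 1
          = a :: (t ++ [kn] ++ List.replicate j 1) := by simp
      rw [h1, shuffleW_one_cons, ih, shuffleW_one_cons]
      simp only [Finsupp.mapDomain_add, Finsupp.mapDomain_smul, Finsupp.mapDomain_single,
        ← Finsupp.mapDomain_comp, Function.comp, List.cons_append]
      abel

section Main
variable {A : Type*} [CommRing A] [Algebra ℚ A] (I : List ℕ → A)

lemma Iext_add (x y : List ℕ →₀ ℚ) : Iext I (x + y) = Iext I x + Iext I y := by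
  simp only [Iext_eq_lift, map_add]

lemma Iext_smul (c : ℚ) (x : List ℕ →₀ ℚ) : Iext I (c • x) = c • Iext I x := by
  simp only [Iext_eq_lift, map_smul]

lemma Iext_single (w : List ℕ) (c : ℚ) : Iext I (Finsupp.single w c) = c • I w := by
  rw [Iext]; exact Finsupp.sum_single_index (by simp)

lemma Iext_mapDomain (f : List ℕ → List ℕ) (x : List ℕ →₀ ℚ) :
    Iext I (Finsupp.mapDomain f x) = x.sum fun w c => c • I (f w) := by
  rw [Iext]
  exact Finsupp.sum_mapDomain_index (by simp) (by intros; rw [add_smul])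

lemma sum_single_apply {M : Type*} [AddCommMonoid M] [Module ℚ M]
    (T : (List ℕ →₀ ℚ) →ₗ[ℚ] M) (x : List ℕ →₀ ℚ) :
    (x.sum fun w c => c • T (Finsupp.single w 1)) = T x := by
  conv_rhs => rw [← Finsupp.sum_single x]
  rw [map_finsuppSum]
  refine Finsupp.sum_congr ?_
  intro w _
  rw [← map_smul, Finsupp.smul_single, smul_eq_mul, mul_one]

end Main

/-- The trailing-ones lemma: if `I : List ℕ → A` (`A` a commutative ℚ-algebra) satisfies the
shuffle relations and `I(1) = 0`, then for any word `(k_1,…,k_n)` and `m ≥ 1`,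
`I(k_1,…,k_n,1,…,1)` (`m` trailing ones) `= ((−1)^m/m!) I(w)`, where `w` is obtained by
shuffling `(1,…,1)` (`m` ones, i.e. the `m`-fold shuffle product of the single-letter word
`1`) with `(k_1,…,k_{n-1})` in the shuffle algebra and then concatenating `k_n` at the end,
`I` being extended linearly. -/
theorem trailing_ones (A : Type*) [CommRing A] [Algebra ℚ A] (I : List ℕ → A)
    (hsh : ∀ v w : List ℕ, I v * I w = Iext I (shuffleW v w))
    (hone : I [1] = 0)
    (ks : List ℕ) (kn : ℕ) (m : ℕ) (hm : 1 ≤ m) :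
    I (ks ++ [kn] ++ List.replicate m 1) =
      (((-1 : ℚ) ^ m / m.factorial)) •
        Iext I (Finsupp.mapDomain (· ++ [kn])
          ((shExt (Finsupp.single [1] 1))^[m] (Finsupp.single ks 1))) := by
  have hrel : ∀ u : List ℕ, Iext I (shuffleW [1] u) = 0 := by
    intro u; rw [← hsh, hone, zero_mul]
  have hiter : ∀ (n : ℕ) (x : List ℕ →₀ ℚ),
      (shExt (Finsupp.single [1] 1))^[n] x = (shL ^ n) x := by
    intro n
    induction n with
    | zero => intro x; simp
    | succ n ih =>
        intro x
        rw [Function.iterate_succ_apply', ih, shExt_one, pow_succ', Module.End.mul_apply]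
  set IL : (List ℕ →₀ ℚ) →ₗ[ℚ] A := Finsupp.lift A ℚ (List ℕ) I with hIL
  have hT : ∀ (n : ℕ) (x : List ℕ →₀ ℚ),
      Iext I (Finsupp.mapDomain (· ++ [kn]) ((shL ^ n) x))
        = (IL ∘ₗ Finsupp.lmapDomain ℚ ℚ (· ++ [kn]) ∘ₗ (shL ^ n)) x := by
    intro n x
    simp [Iext_eq_lift, hIL, Finsupp.lmapDomain_apply]
  induction m, hm using Nat.le_induction generalizing ks with
  | base =>
      have h0 := hrel (ks ++ [kn] ++ List.replicate 0 1)
      rw [shuffleW_one_key, Iext_add, Iext_smul, Iext_single, Iext_mapDomain] at h0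
      simp only [Nat.cast_zero, zero_add, one_smul, List.replicate_zero, List.append_nil,
        List.replicate_one] at h0
      rw [hiter]
      rw [show (shL ^ 1) = shL from pow_one shL, shL_single, Iext_mapDomain]
      have h1 : I (ks ++ [kn] ++ List.replicate 1 1)
          = -(shuffleW [1] ks).sum fun w c => c • I (w ++ [kn]) := by
        rw [List.replicate_one]
        exact eq_neg_of_add_eq_zero_left h0
      rw [h1]
      simp [neg_one_smul]
  | succ n hn ih =>
      have h0 := hrel (ks ++ [kn] ++ List.replicate n 1)
      rw [shuffleW_one_key, Iext_add, Iext_smul, Iext_single, Iext_mapDomain] at h0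
      simp only [one_smul] at h0
      set T : (List ℕ →₀ ℚ) →ₗ[ℚ] A :=
        IL ∘ₗ Finsupp.lmapDomain ℚ ℚ (· ++ [kn]) ∘ₗ (shL ^ n) with hTdef
      have hsum : ((shuffleW [1] ks).sum fun w c => c • I (w ++ [kn] ++ List.replicate n 1))
          = ((-1 : ℚ) ^ n / n.factorial) • T (shuffleW [1] ks) := by
        rw [← sum_single_apply T, Finsupp.smul_sum]
        refine Finsupp.sum_congr ?_
        intro w _
        rw [ih w, hiter, hT, ← hTdef]
        rw [smul_comm]
      have hshift : T (shuffleW [1] ks)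
          = IL (Finsupp.mapDomain (· ++ [kn]) ((shL ^ (n+1)) (Finsupp.single ks 1))) := by
        simp only [hTdef, LinearMap.comp_apply, Finsupp.lmapDomain_apply]
        rw [← shL_single, ← Module.End.mul_apply, ← pow_succ]
      have key : ((n : ℚ) + 1) • I (ks ++ [kn] ++ List.replicate (n+1) 1)
          = -(((-1 : ℚ) ^ n / n.factorial) • T (shuffleW [1] ks)) := by
        rw [← hsum]
        exact eq_neg_of_add_eq_zero_left h0
      have ha : ((n : ℚ) + 1) ≠ 0 := by positivity
      have h2 : I (ks ++ [kn] ++ List.replicate (n+1) 1)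
          = (((n : ℚ) + 1)⁻¹ * (-((-1 : ℚ) ^ n / n.factorial))) • T (shuffleW [1] ks) := by
        rw [mul_smul, neg_smul, ← key, inv_smul_smul₀ ha]
      rw [h2]
      have hc : ((n : ℚ) + 1)⁻¹ * (-((-1 : ℚ) ^ n / n.factorial))
          = (-1 : ℚ) ^ (n+1) / (n+1).factorial := by
        rw [Nat.factorial_succ, pow_succ]
        push_cast
        have hf : (n.factorial : ℚ) ≠ 0 := by positivity
        field_simp
      rw [hc, hiter, Iext_eq_lift, ← hIL, ← hshift]
end
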